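/- arXiv:1403.5750 — 2 statements merged into one kernel-verified Lean document; each statement's English description precedes it below -/
import Mathlib

section
/- Let X ∈ ℝ^{r×(t+1)} have full column rank (i.e., rank X = t+1 ≤ r). Then a matrix A ∈ ℝ^{r×(t+1)} satisfies A·Xᵀ = X·Aᵀ if and only if A = X·E for some symmetric matrix E ∈ ℝ^{(t+1)×(t+1)}. -/
/-! Full column rank gives a left inverse `L` of `X`. Multiplying `A Xᵀ = X Aᵀ` on the right by
`Lᵀ` gives `A = X (L A)ᵀ`, and multiplying this on the left by `L` shows that `L A` is symmetric;
so `E = (L A)ᵀ` works. Conversely `X E Xᵀ` is symmetric whenever `E` is. -/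

open Matrix

namespace Matrix

variable {m n R : Type*} [Fintype m] [Fintype n] [DecidableEq n]

lemma exists_mul_eq_one_of_rank_eq_card {K : Type*} [Field K]
    (X : Matrix m n K) (hX : X.rank = Fintype.card n) : ∃ L : Matrix n m K, L * X = 1 := by
  classical
  have hker : LinearMap.ker X.mulVecLin = ⊥ := by
    have := LinearMap.finrank_range_add_finrank_ker X.mulVecLin
    rw [← rank, hX, Module.finrank_fintype_fun_eq_card] at this
    exact Submodule.finrank_eq_zero.mp (by omega)
  obtain ⟨g, hg⟩ := LinearMap.exists_leftInverse_of_injective _ hker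
  refine ⟨LinearMap.toMatrix' g, ?_⟩
  rw [← LinearMap.toMatrix'_toLin' X, ← LinearMap.toMatrix'_comp, toLin'_apply', hg,
    LinearMap.toMatrix'_id]

omit [Fintype m] [DecidableEq n] in
lemma mul_transpose_eq_of_isSymm [CommSemiring R] (X : Matrix m n R) {E : Matrix n n R}
    (hE : E.IsSymm) : X * E * Xᵀ = X * (X * E)ᵀ := by
  rw [transpose_mul, hE.eq, Matrix.mul_assoc]

lemma mul_transpose_eq_iff_exists_isSymm [CommSemiring R] {X A : Matrix m n R} {L : Matrix n m R}
    (hL : L * X = 1) : A * Xᵀ = X * Aᵀ ↔ ∃ E : Matrix n n R, E.IsSymm ∧ A = X * E := by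
  refine ⟨fun hA => ?_, fun ⟨E, hE, hAE⟩ => hAE ▸ mul_transpose_eq_of_isSymm X hE⟩
  have hA' : A = X * (L * A)ᵀ :=
    calc A = A * (L * X)ᵀ := by rw [hL, transpose_one, Matrix.mul_one]
      _ = X * (L * A)ᵀ := by
        rw [transpose_mul, ← Matrix.mul_assoc, hA, transpose_mul, Matrix.mul_assoc]
  have hLA : L * A = (L * A)ᵀ :=
    calc L * A = L * X * (L * A)ᵀ := by rw [Matrix.mul_assoc, ← hA']
      _ = (L * A)ᵀ := by rw [hL, Matrix.one_mul]
  exact ⟨(L * A)ᵀ, by rw [IsSymm, transpose_transpose, ← hLA], hA'⟩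

end Matrix

theorem stmt_2_general (r t : ℕ)
    (X : Matrix (Fin r) (Fin (t + 1)) ℝ) (hX : X.rank = t + 1)
    (A : Matrix (Fin r) (Fin (t + 1)) ℝ) :
    A * Xᵀ = X * Aᵀ ↔ ∃ E : Matrix (Fin (t + 1)) (Fin (t + 1)) ℝ, E.IsSymm ∧ A = X * E := by
  obtain ⟨L, hL⟩ := X.exists_mul_eq_one_of_rank_eq_card (by rw [hX, Fintype.card_fin])
  exact mul_transpose_eq_iff_exists_isSymm hL

theorem stmt_2 (r t : ℕ) (htr : t + 1 ≤ r)
    (X : Matrix (Fin r) (Fin (t + 1)) ℝ) (hX : X.rank = t + 1)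
    (A : Matrix (Fin r) (Fin (t + 1)) ℝ) :
    A * Xᵀ = X * Aᵀ ↔ ∃ E : Matrix (Fin (t + 1)) (Fin (t + 1)) ℝ, E.IsSymm ∧ A = X * E :=
  stmt_2_general r t X hX A
end

section
/- Let 𝓛 : ℝ^{r×r} → ℝ^{r×(t+1)} be defined by 𝓛(B) = ½(B·X − Bᵀ·X), where X ∈ ℝ^{r×(t+1)} has full column rank. For a given matrix M ∈ ℝ^{r×(t+1)}, the equation 𝓛(B) = M has a solution B ∈ ℝ^{r×r} if and only if ⟨M, X·(e_p·e_qᵀ + e_q·e_pᵀ)⟩ = 0 for all 0 ≤ p ≤ q ≤ t, where ⟨U,V⟩ = trace(U·Vᵀ). -/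
/-!
Since `B * X - Bᵀ * X = (B - Bᵀ) * X`, the equation is solvable exactly when `M = A * X` for a
skew-symmetric `A`, and the trace condition says that `Xᵀ * M` is skew-symmetric. One direction
is immediate. Conversely, with `G = (Xᵀ * X)⁻¹`, `N = M * G * Xᵀ` and the orthogonal projection
`P = X * G * Xᵀ` onto the column space of `X`, the matrix `A = N - Nᵀ * (1 - P)` is skew-symmetric
and satisfies `A * X = M`.
-/

open Matrix

variable {K m n : Type*}

lemma trace_mul_transpose_mul_single_add_single [CommRing K] [Fintype m] [Fintype n]
    [DecidableEq n] (M X : Matrix m n K) (p q : n) :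
    trace (M * (X * (single p q (1 : K) + single q p 1))ᵀ) = (Xᵀ * M) p q + (Xᵀ * M) q p := by
  rw [transpose_mul, ← Matrix.mul_assoc, trace_mul_cycle, transpose_add, transpose_single,
    transpose_single, mul_add, trace_add, trace_mul_single, trace_mul_single]
  simp

lemma forall_le_add_eq_zero_iff_transpose_eq_neg [AddCommGroup K] [LinearOrder n]
    (S : Matrix n n K) : (∀ p q, p ≤ q → S p q + S q p = 0) ↔ Sᵀ = -S := by
  constructor
  · intro h
    ext p q
    rcases le_total q p with hqp | hpq
    · exact eq_neg_of_add_eq_zero_left (h q p hqp)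
    · exact eq_neg_of_add_eq_zero_right (h p q hpq)
  · intro h p q _
    rw [← neg_add_cancel (S q p)]
    exact congrArg (· + S q p) (congrFun (congrFun h q) p)

lemma isUnit_of_rank_eq_card [Field K] [Fintype n] [DecidableEq n] {A : Matrix n n K}
    (h : A.rank = Fintype.card n) : IsUnit A := by
  rw [← mulVec_surjective_iff_isUnit, ← coe_mulVecLin, ← LinearMap.range_eq_top]
  apply Submodule.eq_top_of_finrank_eq
  rw [← rank, h, Module.finrank_fintype_fun_eq_card]

lemma isUnit_transpose_mul_self_of_rank_eq_card [Field K] [LinearOrder K] [IsStrictOrderedRing K]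
    [Fintype m] [Fintype n] [DecidableEq n] {X : Matrix m n K} (h : X.rank = Fintype.card n) :
    IsUnit (Xᵀ * X) :=
  isUnit_of_rank_eq_card (by rw [rank_transpose_mul_self, h])

lemma transpose_transpose_mul_smul_sub [CommRing K] [Fintype m] (X : Matrix m n K)
    (B : Matrix m m K) (c : K) :
    (Xᵀ * (c • (B * X - Bᵀ * X)))ᵀ = -(Xᵀ * (c • (B * X - Bᵀ * X))) := by
  simp only [transpose_mul, transpose_smul, transpose_sub, transpose_transpose, Matrix.mul_smul,
    Matrix.mul_sub, Matrix.mul_assoc]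
  rw [← smul_neg, neg_sub]

lemma exists_transpose_eq_neg_mul_eq [CommRing K] [Fintype m] [Fintype n] [DecidableEq m]
    [DecidableEq n] {X M : Matrix m n K} (hX : IsUnit (Xᵀ * X)) (hM : (Xᵀ * M)ᵀ = -(Xᵀ * M)) :
    ∃ A : Matrix m m K, Aᵀ = -A ∧ A * X = M := by
  set G := (Xᵀ * X)⁻¹
  have hGX : G * (Xᵀ * X) = 1 := nonsing_inv_mul _ ((isUnit_iff_isUnit_det _).mp hX)
  have hG : Gᵀ = G := by rw [transpose_nonsing_inv, transpose_mul, transpose_transpose]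
  have hMX : Mᵀ * X = -(Xᵀ * M) := by rwa [transpose_mul, transpose_transpose] at hM
  set N := M * G * Xᵀ
  set P := X * G * Xᵀ
  have hNX : N * X = M := by simp only [N, Matrix.mul_assoc, hGX, Matrix.mul_one]
  have hPX : P * X = X := by simp only [P, Matrix.mul_assoc, hGX, Matrix.mul_one]
  have hPT : Pᵀ = P := by simp only [P, transpose_mul, transpose_transpose, hG, Matrix.mul_assoc]
  have hPN : P * N = -(Nᵀ * P) := by
    simp only [N, P, transpose_mul, transpose_transpose, hG, Matrix.mul_assoc]
    rw [← Matrix.mul_assoc Mᵀ, hMX]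
    simp only [Matrix.neg_mul, Matrix.mul_neg, neg_neg, Matrix.mul_assoc]
  clear_value N P
  refine ⟨N - Nᵀ * (1 - P), ?_, ?_⟩
  · rw [transpose_sub, transpose_mul, transpose_sub, transpose_transpose, transpose_one, hPT,
      Matrix.sub_mul, Matrix.one_mul, hPN, Matrix.mul_sub, Matrix.mul_one]
    abel
  · rw [Matrix.sub_mul, Matrix.mul_assoc, Matrix.sub_mul, hPX, Matrix.one_mul, sub_self,
      Matrix.mul_zero, sub_zero, hNX]

lemma half_smul_sub_transpose_mul_of_transpose_eq_neg [Field K] [NeZero (2 : K)] [Fintype m]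
    {A : Matrix m m K} (hA : Aᵀ = -A) (X : Matrix m n K) :
    (1 / 2 : K) • (A * X - Aᵀ * X) = A * X := by
  rw [hA, Matrix.neg_mul, sub_neg_eq_add, ← two_smul K, smul_smul]
  simp [NeZero.ne (2 : K)]

theorem stmt_5_general (r t : ℕ)
    (X : Matrix (Fin r) (Fin (t + 1)) ℝ) (hX : X.rank = t + 1)
    (M : Matrix (Fin r) (Fin (t + 1)) ℝ) :
    (∃ B : Matrix (Fin r) (Fin r) ℝ, (1 / 2 : ℝ) • (B * X - Bᵀ * X) = M) ↔
    ∀ p q : Fin (t + 1), p ≤ q →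
      Matrix.trace (M * (X * (Matrix.single p q (1 : ℝ) +
        Matrix.single q p (1 : ℝ)))ᵀ) = 0 := by
  simp_rw [trace_mul_transpose_mul_single_add_single, forall_le_add_eq_zero_iff_transpose_eq_neg]
  constructor
  · rintro ⟨B, rfl⟩
    exact transpose_transpose_mul_smul_sub X B _
  · intro hM
    have hGram := isUnit_transpose_mul_self_of_rank_eq_card (X := X)
      (by rw [hX, Fintype.card_fin])
    obtain ⟨A, hA, rfl⟩ := exists_transpose_eq_neg_mul_eq hGram hM
    exact ⟨A, half_smul_sub_transpose_mul_of_transpose_eq_neg hA X⟩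

theorem stmt_5 (r t : ℕ) (htr : t + 1 ≤ r)
    (X : Matrix (Fin r) (Fin (t + 1)) ℝ) (hX : X.rank = t + 1)
    (M : Matrix (Fin r) (Fin (t + 1)) ℝ) :
    (∃ B : Matrix (Fin r) (Fin r) ℝ, (1 / 2 : ℝ) • (B * X - Bᵀ * X) = M) ↔
    ∀ p q : Fin (t + 1), p ≤ q →
      Matrix.trace (M * (X * (Matrix.single p q (1 : ℝ) +
        Matrix.single q p (1 : ℝ)))ᵀ) = 0 :=
  stmt_5_general r t X hX M
end
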